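/- For a classical structure (X, ∇, ⊥), the comultiplication Δ has right adjoint ∇ and the counit ⊤ has right adjoint ⊥ with respect to the convolution ordering; explicitly the following four equalities hold: (i) 𝟙_X = Δ_X ≫ (𝟙_X ⊗ (Δ ≫ ∇)) ≫ ∇_X; (ii) ∇ ≫ Δ = Δ_{X⊗X} ≫ ((∇ ≫ Δ) ⊗ 𝟙_{X⊗X}) ≫ ∇_{X⊗X}, where ∇_{X⊗X}, Δ_{X⊗X} belong to the tensor classical structure on X ⊗ X; (iii) 𝟙_X = Δ_X ≫ (𝟙_X ⊗ (⊤ ≫ ⊥)) ≫ ∇_X; (iv) ⊥ ≫ ⊤ = λ_I⁻¹ ≫ ((⊥ ≫ ⊤) ⊗ 𝟙_I) ≫ λ_I. -/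

import Mathlib

open CategoryTheory MonoidalCategory

universe v u

variable {C : Type u} [Category.{v} C] [MonoidalCategory C] [SymmetricCategory C]

/-- A dagger structure on a symmetric monoidal category: an involutive,
identity-on-objects, contravariant functor that coherently preserves the
symmetric monoidal structure. -/
structure Dagger (C : Type u) [Category.{v} C] [MonoidalCategory C]
    [SymmetricCategory C] where
  dag : ∀ {A B : C}, (A ⟶ B) → (B ⟶ A)
  dag_comp : ∀ {A B E : C} (f : A ⟶ B) (g : B ⟶ E), dag (f ≫ g) = dag g ≫ dag f
  dag_id : ∀ A : C, dag (𝟙 A) = 𝟙 A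
  dag_dag : ∀ {A B : C} (f : A ⟶ B), dag (dag f) = f
  dag_tensor : ∀ {A B A' B' : C} (f : A ⟶ B) (g : A' ⟶ B'),
    dag (f ⊗ₘ g) = dag f ⊗ₘ dag g
  dag_assoc : ∀ A B E : C, dag (α_ A B E).hom = (α_ A B E).inv
  dag_lUnit : ∀ A : C, dag (λ_ A).hom = (λ_ A).inv
  dag_rUnit : ∀ A : C, dag (ρ_ A).hom = (ρ_ A).inv
  dag_braid : ∀ A B : C, dag (β_ A B).hom = (β_ A B).inv

/-- Positivity of an endomorphism: `e = g† ≫ g` for some `g : W ⟶ A`. -/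
def Dagger.IsPositive (D : Dagger C) {A : C} (e : A ⟶ A) : Prop :=
  ∃ (W : C) (g : W ⟶ A), e = D.dag g ≫ g

/-- A classical structure: a commutative monoid object which, together with the
daggers of its multiplication and unit, is a special Frobenius algebra. -/
structure ClassicalStructure (D : Dagger C) (X : C) where
  mul : X ⊗ X ⟶ X
  unit : 𝟙_ C ⟶ X
  mul_assoc' : (α_ X X X).hom ≫ (𝟙 X ⊗ₘ mul) ≫ mul = (mul ⊗ₘ 𝟙 X) ≫ mul
  one_mul' : (unit ⊗ₘ 𝟙 X) ≫ mul = (λ_ X).hom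
  mul_one' : (𝟙 X ⊗ₘ unit) ≫ mul = (ρ_ X).hom
  mul_comm' : (β_ X X).hom ≫ mul = mul
  frobenius' : (𝟙 X ⊗ₘ D.dag mul) ≫ (α_ X X X).inv ≫ (mul ⊗ₘ 𝟙 X) = mul ≫ D.dag mul
  special' : D.dag mul ≫ mul = 𝟙 X

namespace ClassicalStructure

variable {D : Dagger C}

/-- The comultiplication `Δ := ∇†`. -/
def comul {X : C} (S : ClassicalStructure D X) : X ⟶ X ⊗ X := D.dag S.mul

/-- The counit `⊤ := ⊥†`. -/
def counit {X : C} (S : ClassicalStructure D X) : X ⟶ 𝟙_ C := D.dag S.unit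

/-- The induced Bell state `η := ⊥ ≫ Δ`. -/
def eta {X : C} (S : ClassicalStructure D X) : 𝟙_ C ⟶ X ⊗ X := S.unit ≫ S.comul

/-- The induced Bell costate `ε := ∇ ≫ ⊤`. -/
def eps {X : C} (S : ClassicalStructure D X) : X ⊗ X ⟶ 𝟙_ C := S.mul ≫ S.counit

/-- The decoherence `Ξ := ∇ ≫ Δ`. -/
def Xi {X : C} (S : ClassicalStructure D X) : X ⊗ X ⟶ X ⊗ X := S.mul ≫ S.comul

end ClassicalStructure

/-- A morphism `f : X ⟶ Y` between classical structures is classical if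
`(Δ_X ⊗ 𝟙_Y) ≫ (𝟙_X ⊗ f ⊗ 𝟙_Y) ≫ (𝟙_X ⊗ ∇_Y)` is positive. -/
def IsClassical {X Y : C} (D : Dagger C) (XS : ClassicalStructure D X)
    (YS : ClassicalStructure D Y) (f : X ⟶ Y) : Prop :=
  D.IsPositive ((XS.comul ⊗ₘ 𝟙 Y) ≫ ((𝟙 X ⊗ₘ f) ⊗ₘ 𝟙 Y) ≫ (α_ X Y Y).hom ≫ (𝟙 X ⊗ₘ YS.mul))

/-- The conjugate `f_* := (η_Y ⊗ 𝟙_X) ≫ (𝟙_Y ⊗ f† ⊗ 𝟙_X) ≫ (𝟙_Y ⊗ ε_X)`. -/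
def conjugate {X Y : C} (D : Dagger C) (XS : ClassicalStructure D X)
    (YS : ClassicalStructure D Y) (f : X ⟶ Y) : X ⟶ Y :=
  (λ_ X).inv ≫ (YS.eta ⊗ₘ 𝟙 X) ≫ (α_ Y Y X).hom ≫ (𝟙 Y ⊗ₘ (D.dag f ⊗ₘ 𝟙 X)) ≫
    (𝟙 Y ⊗ₘ XS.eps) ≫ (ρ_ Y).hom

/-- The convolution `f ⋆ g := Δ_X ≫ (f_* ⊗ g) ≫ ∇_Y`. -/
def convol {X Y : C} (D : Dagger C) (XS : ClassicalStructure D X)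
    (YS : ClassicalStructure D Y) (f g : X ⟶ Y) : X ⟶ Y :=
  XS.comul ≫ (conjugate D XS YS f ⊗ₘ g) ≫ YS.mul

/-- A relation is a convolution-idempotent: `r = r ⋆ r`. -/
def IsRelation {X Y : C} (D : Dagger C) (XS : ClassicalStructure D X)
    (YS : ClassicalStructure D Y) (r : X ⟶ Y) : Prop :=
  r = convol D XS YS r r

/-- Single-valuedness: `r ≫ Δ_Y = Δ_X ≫ (r ⊗ r)`. -/
def SingleValued {X Y : C} (D : Dagger C) (XS : ClassicalStructure D X)
    (YS : ClassicalStructure D Y) (r : X ⟶ Y) : Prop :=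
  r ≫ YS.comul = XS.comul ≫ (r ⊗ₘ r)

/-- Totality: `r ≫ ⊤_Y = ⊤_X`. -/
def TotalRel {X Y : C} (D : Dagger C) (XS : ClassicalStructure D X)
    (YS : ClassicalStructure D Y) (r : X ⟶ Y) : Prop :=
  r ≫ YS.counit = XS.counit

/-- A function is a single-valued total relation. -/
def IsFunctionRel {X Y : C} (D : Dagger C) (XS : ClassicalStructure D X)
    (YS : ClassicalStructure D Y) (r : X ⟶ Y) : Prop :=
  IsRelation D XS YS r ∧ SingleValued D XS YS r ∧ TotalRel D XS YS r

/-- The middle-four interchange `(X ⊗ Y) ⊗ (Z ⊗ W) ⟶ (X ⊗ Z) ⊗ (Y ⊗ W)`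
built from associators and the braiding. -/
def midSwap (X Y Z W : C) : (X ⊗ Y) ⊗ (Z ⊗ W) ⟶ (X ⊗ Z) ⊗ (Y ⊗ W) :=
  (α_ X Y (Z ⊗ W)).hom ≫ (𝟙 X ⊗ₘ (α_ Y Z W).inv) ≫ (𝟙 X ⊗ₘ ((β_ Y Z).hom ⊗ₘ 𝟙 W)) ≫
    (𝟙 X ⊗ₘ (α_ Z Y W).hom) ≫ (α_ X Z (Y ⊗ W)).inv

/-- The multiplication `∇_{X⊗Y} := (𝟙_X ⊗ β_{Y,X} ⊗ 𝟙_Y) ≫ (∇_X ⊗ ∇_Y)` of the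
tensor of two classical structures. -/
def tensorMul {X Y : C} {D : Dagger C} (XS : ClassicalStructure D X)
    (YS : ClassicalStructure D Y) : (X ⊗ Y) ⊗ (X ⊗ Y) ⟶ X ⊗ Y :=
  midSwap X Y X Y ≫ (XS.mul ⊗ₘ YS.mul)

/-- The unit `⊥_{X⊗Y} := ⊥_X ⊗ ⊥_Y` of the tensor of two classical structures. -/
def tensorUnit'' {X Y : C} {D : Dagger C} (XS : ClassicalStructure D X)
    (YS : ClassicalStructure D Y) : 𝟙_ C ⟶ X ⊗ Y :=
  (λ_ (𝟙_ C)).inv ≫ (XS.unit ⊗ₘ YS.unit)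

/-- Complete positivity of `g : X ⊗ X ⟶ Y ⊗ Y` relative to the self-dual compact
structures induced by the classical structures:
`(𝟙_X ⊗ η_X ⊗ 𝟙_Y) ≫ (𝟙_X ⊗ g ⊗ 𝟙_Y) ≫ (𝟙_{X⊗Y} ⊗ ε_Y)` is positive. -/
def IsCP {X Y : C} (D : Dagger C) (XS : ClassicalStructure D X)
    (YS : ClassicalStructure D Y) (g : X ⊗ X ⟶ Y ⊗ Y) : Prop :=
  D.IsPositive ((𝟙 X ⊗ₘ (λ_ Y).inv) ≫ (𝟙 X ⊗ₘ (XS.eta ⊗ₘ 𝟙 Y)) ≫ (𝟙 X ⊗ₘ (g ⊗ₘ 𝟙 Y)) ≫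
    (𝟙 X ⊗ₘ (α_ Y Y Y).hom) ≫ (α_ X Y (Y ⊗ Y)).inv ≫ (𝟙 (X ⊗ Y) ⊗ₘ YS.eps) ≫
    (ρ_ (X ⊗ Y)).hom)

/-- A stochastic morphism: classical and total. -/
def Stochastic {X Y : C} (D : Dagger C) (XS : ClassicalStructure D X)
    (YS : ClassicalStructure D Y) (s : X ⟶ Y) : Prop :=
  IsClassical D XS YS s ∧ TotalRel D XS YS s

/-- A doubly stochastic morphism: both `s` and `s†` are stochastic. -/
def DoublyStochastic {X Y : C} (D : Dagger C) (XS : ClassicalStructure D X)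
    (YS : ClassicalStructure D Y) (s : X ⟶ Y) : Prop :=
  Stochastic D XS YS s ∧ Stochastic D YS XS (D.dag s)

/-! Parts (i), (iii) and (iv) are specialness, counitality and the fact that the left unitor
of `𝟙_ C` commutes with scalars. For (ii), in Sweedler notation `Δ_{X⊗X} (a ⊗ b)` is
`(a₁ ⊗ b₁) ⊗ (a₂ ⊗ b₂)`. The two Frobenius laws and commutativity give
`Δ(z) · (a ⊗ b) = Δ(z a b)`, so the right-hand side of (ii) is
`Δ(a₁ b₁ a₂ b₂) = Δ((a₁ a₂)(b₁ b₂)) = Δ(a b)` by commutativity and specialness. -/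

namespace Dagger

variable (D : Dagger C)

lemma dag_assoc_inv (A B E : C) : D.dag (α_ A B E).inv = (α_ A B E).hom := by
  rw [← D.dag_assoc, D.dag_dag]

lemma dag_whiskerLeft (A : C) {B B' : C} (f : B ⟶ B') : D.dag (A ◁ f) = A ◁ D.dag f := by
  rw [← id_tensorHom, D.dag_tensor, D.dag_id, id_tensorHom]

lemma dag_whiskerRight {A A' : C} (f : A ⟶ A') (B : C) : D.dag (f ▷ B) = D.dag f ▷ B := by
  rw [← tensorHom_id, D.dag_tensor, D.dag_id, tensorHom_id]

lemma dag_midSwap (X Y Z W : C) : D.dag (midSwap X Y Z W) = midSwap X Z Y W := by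
  simp only [midSwap, D.dag_comp, D.dag_tensor, D.dag_id, D.dag_assoc, D.dag_assoc_inv,
    D.dag_braid, ← SymmetricCategory.braiding_swap_eq_inv_braiding, Category.assoc]

end Dagger

lemma midSwap_eq_tensorμ (X Y Z W : C) : midSwap X Y Z W = tensorμ X Y Z W := by
  simp [midSwap, tensorμ]

namespace ClassicalStructure

variable {D : Dagger C} {X : C} (S : ClassicalStructure D X)

lemma mul_assoc : S.mul ▷ X ≫ S.mul = (α_ X X X).hom ≫ X ◁ S.mul ≫ S.mul := by
  simpa using S.mul_assoc'.symm

lemma comul_mul : S.comul ≫ S.mul = 𝟙 X := S.special'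

lemma comul_whiskerLeft_counit : S.comul ≫ X ◁ S.counit = (ρ_ X).inv := by
  simpa [comul, counit, D.dag_comp, D.dag_whiskerLeft, D.dag_rUnit] using congrArg D.dag S.mul_one'

lemma frobenius_left : X ◁ S.comul ≫ (α_ X X X).inv ≫ S.mul ▷ X = S.mul ≫ S.comul := by
  simpa [comul] using S.frobenius'

lemma frobenius_right : S.comul ▷ X ≫ (α_ X X X).hom ≫ X ◁ S.mul = S.mul ≫ S.comul := by
  simpa [comul, D.dag_comp, D.dag_whiskerLeft, D.dag_whiskerRight, D.dag_assoc_inv,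
    D.dag_dag] using congrArg D.dag S.frobenius'

lemma dag_tensorMul {Y : C} (T : ClassicalStructure D Y) :
    D.dag (tensorMul S T) = (S.comul ⊗ₘ T.comul) ≫ midSwap X X Y Y := by
  rw [tensorMul, D.dag_comp, D.dag_tensor, D.dag_midSwap]
  rfl

lemma mul_mul_mul_comm :
    tensorμ X X X X ≫ (S.mul ⊗ₘ S.mul) ≫ S.mul = (S.mul ⊗ₘ S.mul) ≫ S.mul := by
  let _ : MonObj X :=
    { one := S.unit
      mul := S.mul
      one_mul := by simpa using S.one_mul'
      mul_one := by simpa using S.mul_one'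
      mul_assoc := S.mul_assoc }
  have : IsCommMonObj X := ⟨S.mul_comm'⟩
  exact MonObj.mul_mul_mul_comm X

open BraidedCategory in
lemma comul_whiskerRight_tensorμ_mul :
    S.comul ▷ (X ⊗ X) ≫ tensorμ X X X X ≫ (S.mul ⊗ₘ S.mul) = X ◁ S.mul ≫ S.mul ≫ S.comul := by
  calc _ = S.comul ▷ (X ⊗ X) ⊗≫ X ◁ (β_ X X).hom ▷ X ⊗≫ ((β_ X X).hom ≫ S.mul) ▷ X ▷ X ⊗≫
          X ◁ S.mul := by
        rw [S.mul_comm', MonoidalCategory.tensorHom_def]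
        simp only [tensorμ]
        monoidal
    _ = (α_ X X X).inv ≫ ((S.comul ▷ X ≫ (β_ (X ⊗ X) X).hom) ▷ X) ⊗≫ S.mul ▷ X ▷ X ⊗≫
          X ◁ S.mul := by
        rw [braiding_tensor_left_hom]
        monoidal
    _ = (α_ X X X).inv ≫ (β_ X X).hom ▷ X ≫
          ((X ◁ S.comul ≫ (α_ X X X).inv ≫ S.mul ▷ X) ▷ X) ⊗≫ X ◁ S.mul := by
        rw [braiding_naturality_left]
        monoidal
    _ = (α_ X X X).inv ≫ ((β_ X X).hom ≫ S.mul) ▷ X ≫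
          S.comul ▷ X ≫ (α_ X X X).hom ≫ X ◁ S.mul := by
        rw [frobenius_left]
        monoidal
    _ = (α_ X X X).inv ≫ S.mul ▷ X ≫ S.mul ≫ S.comul := by
        rw [frobenius_right, mul_comm']
    _ = X ◁ S.mul ≫ S.mul ≫ S.comul := by
        rw [reassoc_of% S.mul_assoc, Iso.inv_hom_id_assoc]

lemma dag_tensorMul_Xi_tensorMul :
    D.dag (tensorMul S S) ≫ (S.Xi ⊗ₘ 𝟙 (X ⊗ X)) ≫ tensorMul S S = S.Xi := by
  rw [dag_tensorMul, tensorMul, midSwap_eq_tensorμ, Xi]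
  calc _ = (S.comul ⊗ₘ S.comul) ≫ tensorμ X X X X ≫ S.mul ▷ (X ⊗ X) ≫
        S.comul ▷ (X ⊗ X) ≫ tensorμ X X X X ≫ (S.mul ⊗ₘ S.mul) := by
        simp only [tensorHom_id, comp_whiskerRight, Category.assoc]
    _ = (S.comul ⊗ₘ S.comul) ≫ tensorμ X X X X ≫ (S.mul ⊗ₘ S.mul) ≫ S.mul ≫ S.comul := by
        rw [comul_whiskerRight_tensorμ_mul, MonoidalCategory.tensorHom_def_assoc S.mul]
    _ = S.mul ≫ S.comul := by
        rw [reassoc_of% S.mul_mul_mul_comm, tensorHom_comp_tensorHom_assoc, comul_mul,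
          id_tensorHom_id, Category.id_comp]

end ClassicalStructure

/-- `Δ ⊣ ∇` and `⊤ ⊣ ⊥` with respect to the convolution
ordering, expressed by the four explicit equalities. -/
theorem comonoid_right_adjoints {X : C} (D : Dagger C)
    (XS : ClassicalStructure D X) :
    (𝟙 X = XS.comul ≫ (𝟙 X ⊗ₘ (XS.comul ≫ XS.mul)) ≫ XS.mul) ∧
    (XS.mul ≫ XS.comul =
      D.dag (tensorMul XS XS) ≫ ((XS.mul ≫ XS.comul) ⊗ₘ 𝟙 (X ⊗ X)) ≫
        tensorMul XS XS) ∧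
    (𝟙 X = XS.comul ≫ (𝟙 X ⊗ₘ (XS.counit ≫ XS.unit)) ≫ XS.mul) ∧
    (XS.unit ≫ XS.counit =
      (λ_ (𝟙_ C)).inv ≫ ((XS.unit ≫ XS.counit) ⊗ₘ 𝟙 (𝟙_ C)) ≫ (λ_ (𝟙_ C)).hom) := by
  refine ⟨?_, (XS.dag_tensorMul_Xi_tensorMul).symm, ?_, ?_⟩
  · rw [XS.comul_mul, id_tensorHom_id, Category.id_comp, XS.comul_mul]
  · rw [id_tensorHom, whiskerLeft_comp_assoc, reassoc_of% XS.comul_whiskerLeft_counit,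
      ← id_tensorHom, XS.mul_one', Iso.inv_hom_id]
  · simp [unitors_equal, unitors_inv_equal]
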